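/- Let V be a finite set with N elements and P a probability distribution on V. For δ ∈ (0,1), if k ≥ log(δ/N) / log(1 − δ/N), then Σ_{v ∈ V} (1 − P(v))^k P(v) ≤ δ. -/

import Mathlib

/-! Every term is at most `δ / N`: trivially when `P v ≤ δ / N`, and otherwise because
`(1 - P v) ^ k * P v ≤ (1 - δ / N) ^ k ≤ δ / N`, the last step being the choice of `k`. -/

theorem one_sub_pow_le_of_log_div_log_le {t : ℝ} (ht0 : 0 < t) (ht1 : t < 1) {k : ℕ}
    (hk : Real.log t / Real.log (1 - t) ≤ k) : (1 - t) ^ k ≤ t := by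
  have hlog_neg : Real.log (1 - t) < 0 := Real.log_neg (by linarith) (by linarith)
  rw [← Real.log_le_log_iff (pow_pos (by linarith) k) ht0, Real.log_pow]
  linarith [(div_le_iff_of_neg hlog_neg).mp hk]

theorem one_sub_pow_mul_le {p t : ℝ} {k : ℕ} (hp0 : 0 ≤ p) (hp1 : p ≤ 1)
    (hk : (1 - t) ^ k ≤ t) : (1 - p) ^ k * p ≤ t := by
  have hpow_le_one : (1 - p) ^ k ≤ 1 := pow_le_one₀ (by linarith) (by linarith)
  rcases le_or_gt p t with hpt | htp
  · nlinarith
  · calc (1 - p) ^ k * p ≤ (1 - t) ^ k * 1 :=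
          mul_le_mul (pow_le_pow_left₀ (by linarith) (by linarith) k) hp1 hp0
            (pow_nonneg (by linarith) k)
      _ ≤ t := by rwa [mul_one]

theorem sum_bound_of_many_samples
    (V : Type*) [Fintype V] (hN : 1 ≤ Fintype.card V)
    (P : V → ℝ) (hP0 : ∀ v, 0 ≤ P v) (hP1 : ∑ v, P v = 1)
    (δ : ℝ) (hδ0 : 0 < δ) (hδ1 : δ < 1)
    (k : ℕ)
    (hk : (k : ℝ) ≥ Real.log (δ / Fintype.card V) /
      Real.log (1 - δ / Fintype.card V)) :
    ∑ v, (1 - P v) ^ k * P v ≤ δ := by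
  have hN' : (1 : ℝ) ≤ Fintype.card V := by exact_mod_cast hN
  have ht0 : 0 < δ / Fintype.card V := by positivity
  have ht1 : δ / Fintype.card V < 1 := (div_le_self hδ0.le hN').trans_lt hδ1
  have hP_le_one (v : V) : P v ≤ 1 :=
    hP1 ▸ Finset.single_le_sum (fun w _ => hP0 w) (Finset.mem_univ v)
  have hpow := one_sub_pow_le_of_log_div_log_le ht0 ht1 hk
  calc ∑ v, (1 - P v) ^ k * P v ≤ ∑ _v : V, δ / Fintype.card V :=
        Finset.sum_le_sum fun v _ => one_sub_pow_mul_le (hP0 v) (hP_le_one v) hpow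
    _ = δ := by rw [Finset.sum_const, Finset.card_univ, nsmul_eq_mul]; field_simp
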